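/- Let X be a Banach space, let F ⊆ X be a closed, bounded, convex set with 0 in its interior, and let Ω, Ω_1, …, Ω_n (n ≥ 2) be nonempty closed convex subsets of X. Fix x̄ ∈ Ω and assume that Π^F_{Ω_i}(x̄) ≠ ∅ for each i with x̄ ∉ Ω_i; for each such i select ω̄_i ∈ Π^F_{Ω_i}(x̄) and set A_i(x̄) := N(ω̄_i;Ω_i) ∩ (−∂ρ_F(ω̄_i − x̄)), while for each i with x̄ ∈ Ω_i set A_i(x̄) := N(x̄;Ω_i) ∩ C*. Then x̄ is a global optimal solution of the generalized Heron problem if and only if 0 ∈ Σ_{i=1}^n A_i(x̄) + N(x̄;Ω) (Minkowski sum of sets in X*). -/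

import Mathlib

/-!
Each `T_i = T^F_{Ω_i}` is the infimum over `ω ∈ Ω_i` of `ρ_F(ω - x)`; since `ρ_F` is sublinear and
bounded by a multiple of the norm, `T_i` is convex and Lipschitz. Hence `x̄` is optimal iff
`0 ∈ ∂(Σ T_i + δ_Ω)(x̄) = Σ ∂T_i(x̄) + N(x̄;Ω)`, the sum rule holding because all but one summand
is continuous; it is proved by separating an open strict epigraph from a hypograph and inducting on
the number of summands. Finally `∂T_i(x̄) = N(ω̄_i;Ω_i) ∩ -∂ρ_F(ω̄_i - x̄)` for any `ω̄_i ∈ Π^F_{Ω_i}(x̄)`;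
when `x̄ ∈ Ω_i` one may take `ω̄_i = x̄`, and `-∂ρ_F(0) = C*`.
-/

open Set Metric Bornology Pointwise

/-- The minimal time function `T^F_Q(x) = inf {t ≥ 0 : Q ∩ (x + tF) ≠ ∅}`. -/
noncomputable def minTime {X : Type*} [NormedAddCommGroup X] [NormedSpace ℝ X]
    (F Q : Set X) (x : X) : ℝ :=
  sInf {t : ℝ | 0 ≤ t ∧ (Q ∩ ({x} + t • F)).Nonempty}

/-- The normal cone of convex analysis, as a subset of the topological dual:
`N(x̄;C) = {x* : ⟨x*, x - x̄⟩ ≤ 0 for all x ∈ C}`. -/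
def dualNormalCone {X : Type*} [NormedAddCommGroup X] [NormedSpace ℝ X]
    (C : Set X) (xbar : X) : Set (X →L[ℝ] ℝ) :=
  {f | ∀ x ∈ C, f (x - xbar) ≤ 0}

/-- The subdifferential of convex analysis of `φ : X → ℝ` at `x̄`, as a subset of
the topological dual. -/
def dualSubdiff {X : Type*} [NormedAddCommGroup X] [NormedSpace ℝ X]
    (φ : X → ℝ) (xbar : X) : Set (X →L[ℝ] ℝ) :=
  {f | ∀ x, f (x - xbar) ≤ φ x - φ xbar}

/-- The support function `σ_F(x*) = sup {⟨x*, x⟩ : x ∈ F}`. -/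
noncomputable def suppFn {X : Type*} [NormedAddCommGroup X] [NormedSpace ℝ X]
    (F : Set X) (f : X →L[ℝ] ℝ) : ℝ :=
  sSup (f '' F)


lemma mem_singleton_add_iff {X : Type*} [AddCommGroup X] {x y : X} {s : Set X} :
    y ∈ ({x} : Set X) + s ↔ y - x ∈ s := by
  rw [singleton_add, image_add_left, mem_preimage, neg_add_eq_sub]

section MinimalTime

variable {X : Type*} [NormedAddCommGroup X] [NormedSpace ℝ X] {F Q : Set X} {x y q : X}

lemma minTime_nonneg : 0 ≤ minTime F Q x :=
  Real.sInf_nonneg fun _ ht => ht.1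

lemma minTime_le_of_sub_mem_smul {t : ℝ} (hq : q ∈ Q) (ht : 0 ≤ t) (h : q - x ∈ t • F) :
    minTime F Q x ≤ t :=
  csInf_le ⟨0, fun _ hs => hs.1⟩ ⟨ht, q, hq, mem_singleton_add_iff.2 h⟩

lemma minTime_le_gauge_sub (hF : Absorbent ℝ F) (hq : q ∈ Q) :
    minTime F Q x ≤ gauge F (q - x) := by
  refine le_of_forall_gt_imp_ge_of_dense fun t ht => ?_
  obtain ⟨b, hb, hbt, hmem⟩ := exists_lt_of_gauge_lt hF ht
  exact (minTime_le_of_sub_mem_smul hq hb.le hmem).trans hbt.le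

lemma minTime_eq_zero_of_mem (hF : Absorbent ℝ F) (hx : x ∈ Q) : minTime F Q x = 0 :=
  le_antisymm ((minTime_le_gauge_sub hF hx).trans_eq (by rw [sub_self, gauge_zero]))
    minTime_nonneg

lemma minTime_eq_gauge_sub (hF : Absorbent ℝ F) (hq : q ∈ Q) (h : q - x ∈ minTime F Q x • F) :
    minTime F Q x = gauge F (q - x) :=
  le_antisymm (minTime_le_gauge_sub hF hq) (gauge_le_of_mem minTime_nonneg h)

lemma exists_gauge_sub_lt_minTime_add (hF : Absorbent ℝ F) (hQ : Q.Nonempty) {ε : ℝ}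
    (hε : 0 < ε) : ∃ q ∈ Q, gauge F (q - x) < minTime F Q x + ε := by
  obtain ⟨q₀, hq₀⟩ := hQ
  obtain ⟨b, hb, hbx⟩ := hF.gauge_set_nonempty (x := q₀ - x)
  have hfeas : {t : ℝ | 0 ≤ t ∧ (Q ∩ ({x} + t • F)).Nonempty}.Nonempty :=
    ⟨b, hb.le, q₀, hq₀, mem_singleton_add_iff.2 hbx⟩
  obtain ⟨t, ⟨ht, q, hq, hqt⟩, htlt⟩ :=
    exists_lt_of_csInf_lt hfeas (lt_add_of_pos_right (minTime F Q x) hε)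
  exact ⟨q, hq, (gauge_le_of_mem ht (mem_singleton_add_iff.1 hqt)).trans_lt htlt⟩

lemma le_minTime_of_forall_le_gauge_sub (hF : Absorbent ℝ F) (hQ : Q.Nonempty) {a : ℝ}
    (h : ∀ q ∈ Q, a ≤ gauge F (q - x)) : a ≤ minTime F Q x :=
  le_of_forall_pos_lt_add fun _ hε =>
    let ⟨q, hq, hlt⟩ := exists_gauge_sub_lt_minTime_add hF hQ hε
    (h q hq).trans_lt hlt

lemma convexOn_minTime (hF : Absorbent ℝ F) (hFconv : Convex ℝ F) (hQ : Q.Nonempty)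
    (hQconv : Convex ℝ Q) : ConvexOn ℝ univ (minTime F Q) := by
  refine ⟨convex_univ, fun x _ y _ a b ha hb hab => le_of_forall_pos_le_add fun ε hε => ?_⟩
  obtain ⟨q₁, hq₁, h₁⟩ := exists_gauge_sub_lt_minTime_add (x := x) hF hQ hε
  obtain ⟨q₂, hq₂, h₂⟩ := exists_gauge_sub_lt_minTime_add (x := y) hF hQ hε
  calc minTime F Q (a • x + b • y)
      ≤ gauge F ((a • q₁ + b • q₂) - (a • x + b • y)) :=
        minTime_le_gauge_sub hF (hQconv hq₁ hq₂ ha hb hab)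
    _ = gauge F (a • (q₁ - x) + b • (q₂ - y)) := by
        rw [smul_sub, smul_sub, add_sub_add_comm]
    _ ≤ a * gauge F (q₁ - x) + b * gauge F (q₂ - y) := by
        grw [gauge_add_le hFconv hF, gauge_smul_of_nonneg ha, gauge_smul_of_nonneg hb]
        rfl
    _ ≤ a * (minTime F Q x + ε) + b * (minTime F Q y + ε) := by gcongr
    _ = a • minTime F Q x + b • minTime F Q y + ε := by
        simp only [smul_eq_mul]
        linear_combination ε * hab

lemma minTime_le_add_gauge_sub (hF : Absorbent ℝ F) (hFconv : Convex ℝ F) (hQ : Q.Nonempty) :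
    minTime F Q x ≤ minTime F Q y + gauge F (y - x) := by
  rw [← sub_le_iff_le_add]
  refine le_minTime_of_forall_le_gauge_sub hF hQ fun q hq => ?_
  calc minTime F Q x - gauge F (y - x) ≤ gauge F (q - x) - gauge F (y - x) := by
        grw [minTime_le_gauge_sub hF hq]
    _ ≤ gauge F (q - y) := by
        rw [sub_le_iff_le_add, ← sub_add_sub_cancel q y x]
        exact gauge_add_le hFconv hF _ _

lemma continuous_minTime (hF : F ∈ nhds 0) (hFconv : Convex ℝ F) (hQ : Q.Nonempty) :
    Continuous (minTime F Q) := by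
  obtain ⟨r, hr, hball⟩ := Metric.mem_nhds_iff.1 hF
  refine (LipschitzWith.of_le_add_mul' r⁻¹ fun x y => ?_).continuous
  calc minTime F Q x ≤ minTime F Q y + gauge F (y - x) :=
        minTime_le_add_gauge_sub (absorbent_nhds_zero hF) hFconv hQ
    _ ≤ minTime F Q y + r⁻¹ * dist x y := by
        rw [dist_comm, dist_eq_norm, ← div_eq_inv_mul]
        gcongr
        rw [le_div_iff₀ hr, mul_comm]
        exact mul_gauge_le_norm hball

lemma dualSubdiff_minTime_eq (hF : Absorbent ℝ F) {w xb : X} (hw : w ∈ Q)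
    (hwx : w - xb ∈ minTime F Q xb • F) :
    dualSubdiff (minTime F Q) xb = dualNormalCone Q w ∩ -dualSubdiff (gauge F) (w - xb) := by
  have hT := minTime_eq_gauge_sub hF hw hwx
  have hQ : Q.Nonempty := ⟨w, hw⟩
  ext f
  simp only [dualSubdiff, dualNormalCone, mem_inter_iff, mem_neg, mem_ofPred_eq, neg_apply,
    map_sub]
  constructor
  · intro hf
    have hfw : f w - f xb = -minTime F Q xb := by
      have hle := hf w
      rw [minTime_eq_zero_of_mem hF hw] at hle
      -- the reverse bound comes from the reflected point `2 x̄ - w̄`, where `T ≤ 2 T(x̄)`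
      have hge := hf (xb - (w - xb))
      have hrefl : minTime F Q (xb - (w - xb)) ≤ 2 * minTime F Q xb := by
        have hsub : w - (xb - (w - xb)) = (2 : ℝ) • (w - xb) := by rw [two_smul]; abel
        grw [minTime_le_gauge_sub hF hw, hsub, gauge_smul_of_nonneg zero_le_two, hT, smul_eq_mul]
      simp only [map_sub] at hge
      linarith
    refine ⟨fun y hy => ?_, fun y => ?_⟩
    · have := hf y
      rw [minTime_eq_zero_of_mem hF hy] at this
      linarith
    · have := hf (w - y)
      have hle : minTime F Q (w - y) ≤ gauge F y := by
        grw [minTime_le_gauge_sub hF hw, sub_sub_cancel]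
      simp only [map_sub] at this
      linarith
  · rintro ⟨hnormal, hgauge⟩ x
    suffices f x - f xb + minTime F Q xb ≤ minTime F Q x by linarith
    refine le_minTime_of_forall_le_gauge_sub hF hQ fun q hq => ?_
    have hq_gauge := hgauge (q - x)
    have hq_normal := hnormal q hq
    simp only [map_sub] at hq_gauge
    linarith

lemma neg_dualSubdiff_gauge_zero (hF : Absorbent ℝ F) (hFb : IsBounded F) :
    -dualSubdiff (gauge F) 0 = {f | suppFn F (-f) ≤ 1} := by
  ext f
  simp only [dualSubdiff, mem_neg, mem_ofPred_eq, sub_zero, gauge_zero, suppFn]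
  constructor
  · intro hf
    refine Real.sSup_le ?_ zero_le_one
    rintro _ ⟨v, hv, rfl⟩
    exact (hf v).trans (gauge_le_one_of_mem hv)
  · intro hf y
    have hbdd : BddAbove ((-f) '' F) := ((-f).lipschitz.isBounded_image hFb).bddAbove
    refine le_of_forall_gt_imp_ge_of_dense fun t ht => ?_
    obtain ⟨b, hb, hbt, v, hv, rfl⟩ := exists_lt_of_gauge_lt hF ht
    have hv1 : (-f) v ≤ 1 := (le_csSup hbdd (mem_image_of_mem _ hv)).trans hf
    rw [map_smul, smul_eq_mul]
    nlinarith

lemma dualSubdiff_minTime_of_mem (hF : Absorbent ℝ F) (hFb : IsBounded F) {xb : X}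
    (hx : xb ∈ Q) :
    dualSubdiff (minTime F Q) xb = dualNormalCone Q xb ∩ {f | suppFn F (-f) ≤ 1} := by
  have h0 : xb - xb ∈ minTime F Q xb • F := by
    rw [sub_self, minTime_eq_zero_of_mem hF hx, zero_smul_set ⟨0, hF.zero_mem⟩]
    exact zero_mem_zero
  rw [dualSubdiff_minTime_eq hF hx h0, sub_self, neg_dualSubdiff_gauge_zero hF hFb]

end MinimalTime

section SumRule

variable {X : Type*} [NormedAddCommGroup X] [NormedSpace ℝ X] {S : Set X} {xb : X}

/-- Separating the open strict epigraph of `φ` from the hypograph of `φ x̄ + ψ x̄ - ψ` over `S`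
yields a subgradient of `φ` that can replace `φ` in the minimization. -/
lemma exists_mem_dualSubdiff_isMinOn_add {φ ψ : X → ℝ} (hφ : ConvexOn ℝ univ φ)
    (hφc : Continuous φ) (hψ : ConvexOn ℝ S ψ) (hxb : xb ∈ S) (hmin : IsMinOn (φ + ψ) S xb) :
    ∃ a ∈ dualSubdiff φ xb, IsMinOn (ψ + ⇑a) S xb := by
  set epi : Set (X × ℝ) := {p | p.1 ∈ univ ∧ φ p.1 < p.2}
  set hypo : Set (X × ℝ) := {p | p.1 ∈ S ∧ p.2 ≤ φ xb + ψ xb - ψ p.1}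
  have hepi_open : IsOpen epi := by
    simp only [epi, mem_univ, true_and]
    exact isOpen_lt (hφc.comp continuous_fst) continuous_snd
  have hdisj : Disjoint epi hypo := by
    refine disjoint_left.2 fun ⟨x, t⟩ ⟨_, hlt⟩ ⟨hx, hle⟩ => ?_
    have := isMinOn_iff.1 hmin x hx
    simp only [Pi.add_apply] at this
    linarith
  obtain ⟨f, u, hfepi, hfhypo⟩ := geometric_hahn_banach_open hφ.convex_strict_epigraph
    hepi_open ((concaveOn_const _ hψ.1).sub hψ).convex_hypograph hdisj
  set g := f.comp (ContinuousLinearMap.inl ℝ X ℝ)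
  set c := f (0, 1)
  have hf : ∀ x t, f (x, t) = g x + t * c := fun x t => by
    rw [← add_zero x, ← zero_add t, ← Prod.mk_add_mk, map_add, ← mul_one t, ← smul_eq_mul,
      ← Prod.smul_zero_mk, map_smul]
    simp [g, c]
  have h_epi : ∀ x t, φ x < t → g x + t * c < u := fun x t h => hf x t ▸ hfepi _ ⟨trivial, h⟩
  have h_hypo : ∀ x ∈ S, u ≤ g x + (φ xb + ψ xb - ψ x) * c :=
    fun x hx => hf x _ ▸ hfhypo _ ⟨hx, le_rfl⟩
  have hc : 0 < -c := by
    have h1 := h_epi xb (φ xb + 1) (lt_add_one _)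
    have h2 := h_hypo xb hxb
    linarith
  have h_graph : ∀ x, g x + φ x * c ≤ u := fun x =>
    le_of_forall_pos_lt_add fun ε hε => by
      have := h_epi x (φ x + ε / -c) (lt_add_of_pos_right _ (div_pos hε hc))
      rw [add_mul, div_mul_eq_mul_div, div_neg, mul_div_cancel_right₀ _ (neg_ne_zero.1 hc.ne')]
        at this
      linarith
  have hg : ∀ x, (-c⁻¹ • g) x = g x / -c := fun x => by
    rw [smul_apply, smul_eq_mul, neg_mul, div_neg, inv_mul_eq_div]
  refine ⟨-c⁻¹ • g, fun x => ?_, isMinOn_iff.2 fun x hx => ?_⟩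
  · have := h_graph x
    have := h_hypo xb hxb
    rw [map_sub, hg, hg, ← sub_div, div_le_iff₀ hc]
    linarith
  · have := h_graph xb
    have := h_hypo x hx
    have key : ψ xb - ψ x ≤ (g x - g xb) / -c := by
      rw [le_div_iff₀ hc]
      linarith
    simp only [Pi.add_apply, hg]
    rw [sub_div] at key
    linarith

variable {ι : Type*} {φ : ι → X → ℝ}

lemma exists_mem_dualSubdiff_isMinOn_sum_add [DecidableEq ι] (s : Finset ι)
    (hφ : ∀ i ∈ s, ConvexOn ℝ univ (φ i)) (hφc : ∀ i ∈ s, Continuous (φ i)) {ψ : X → ℝ}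
    (hψ : ConvexOn ℝ S ψ) (hxb : xb ∈ S) (hmin : IsMinOn (∑ i ∈ s, φ i + ψ) S xb) :
    ∃ a : ι → X →L[ℝ] ℝ, (∀ i ∈ s, a i ∈ dualSubdiff (φ i) xb) ∧
      IsMinOn (ψ + ⇑(∑ i ∈ s, a i)) S xb := by
  induction s using Finset.induction generalizing ψ with
  | empty => exact ⟨0, by simp, by simpa using hmin⟩
  | insert j s hj ih =>
    simp only [Finset.mem_insert, forall_eq_or_imp] at hφ hφc
    have hψj : ConvexOn ℝ S (φ j + ψ) := (hφ.1.subset (subset_univ S) hψ.1).add hψ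
    obtain ⟨a, ha, hamin⟩ := ih hφ.2 hφc.2 hψj
      (by rwa [Finset.sum_insert hj, add_comm (φ j), add_assoc] at hmin)
    have hψa : ConvexOn ℝ S (ψ + ⇑(∑ i ∈ s, a i)) :=
      hψ.add ((∑ i ∈ s, a i).toLinearMap.convexOn hψ.1)
    obtain ⟨b, hb, hbmin⟩ := exists_mem_dualSubdiff_isMinOn_add hφ.1 hφc.1 hψa hxb
      (by rwa [add_assoc] at hamin)
    refine ⟨Function.update a j b, ?_, ?_⟩
    · simp only [Finset.mem_insert, forall_eq_or_imp, Function.update_self]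
      refine ⟨hb, fun i hi => ?_⟩
      rw [Function.update_of_ne (ne_of_mem_of_not_mem hi hj)]
      exact ha i hi
    · rwa [Finset.sum_insert hj, Function.update_self, Finset.sum_update_of_notMem hj,
        FunLike.coe_add, add_comm ⇑b, ← add_assoc]

theorem isMinOn_sum_iff_exists_dualSubdiff [Fintype ι] (hφ : ∀ i, ConvexOn ℝ univ (φ i))
    (hφc : ∀ i, Continuous (φ i)) (hS : Convex ℝ S) (hxb : xb ∈ S) :
    IsMinOn (∑ i, φ i) S xb ↔ ∃ a : ι → X →L[ℝ] ℝ, (∀ i, a i ∈ dualSubdiff (φ i) xb) ∧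
      ∃ w ∈ dualNormalCone S xb, ∑ i, a i + w = 0 := by
  classical
  constructor
  · intro hmin
    obtain ⟨a, ha, hamin⟩ := exists_mem_dualSubdiff_isMinOn_sum_add (ψ := 0) Finset.univ
      (fun i _ => hφ i) (fun i _ => hφc i) (convexOn_const 0 hS) hxb (by simpa using hmin)
    refine ⟨a, fun i => ha i (Finset.mem_univ i), -∑ i, a i, fun x hx => ?_, add_neg_cancel _⟩
    have := isMinOn_iff.1 hamin x hx
    simp only [Pi.add_apply, Pi.zero_apply, zero_add] at this
    simp only [neg_apply, map_sub]
    linarith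
  · rintro ⟨a, ha, w, hw, hsum⟩
    refine isMinOn_iff.2 fun x hx => ?_
    have hzero : ∑ i, a i (x - xb) + w (x - xb) = 0 := by
      simpa [sum_apply] using congr($hsum (x - xb))
    have hle : ∑ i, a i (x - xb) ≤ ∑ i, (φ i x - φ i xb) :=
      Finset.sum_le_sum fun i _ => ha i x
    simp only [Finset.sum_apply, Finset.sum_sub_distrib] at hle ⊢
    linarith [hw x hx]

end SumRule

theorem heron_convex_optimality_banach_general
    {X : Type*} [NormedAddCommGroup X] [NormedSpace ℝ X]
    (F : Set X) (hFb : IsBounded F) (hFconv : Convex ℝ F)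
    (hF0 : (0 : X) ∈ interior F)
    (n : ℕ)
    (Ω : Set X) (hΩconv : Convex ℝ Ω)
    (Ωi : Fin n → Set X) (hΩine : ∀ i, (Ωi i).Nonempty)
    (hΩiconv : ∀ i, Convex ℝ (Ωi i))
    (xbar : X) (hxbar : xbar ∈ Ω)
    (wbar : Fin n → X)
    (hwbar : ∀ i, xbar ∉ Ωi i →
      wbar i ∈ Ωi i ∩ ({xbar} + minTime F (Ωi i) xbar • F))
    (A : Fin n → Set (X →L[ℝ] ℝ))
    (hAout : ∀ i, xbar ∉ Ωi i →
      A i = dualNormalCone (Ωi i) (wbar i) ∩ (-(dualSubdiff (gauge F) (wbar i - xbar))))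
    (hAin : ∀ i, xbar ∈ Ωi i →
      A i = dualNormalCone (Ωi i) xbar ∩ {f | suppFn F (-f) ≤ 1}) :
    (∀ x ∈ Ω, ∑ i, minTime F (Ωi i) xbar ≤ ∑ i, minTime F (Ωi i) x) ↔
      ∃ a : Fin n → (X →L[ℝ] ℝ), (∀ i, a i ∈ A i) ∧
        ∃ w ∈ dualNormalCone Ω xbar, ∑ i, a i + w = 0 := by
  have hFnhds : F ∈ nhds 0 := mem_interior_iff_mem_nhds.1 hF0
  have hFabs : Absorbent ℝ F := absorbent_nhds_zero hFnhds
  have hA : ∀ i, A i = dualSubdiff (minTime F (Ωi i)) xbar := fun i => by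
    by_cases hi : xbar ∈ Ωi i
    · rw [hAin i hi, dualSubdiff_minTime_of_mem hFabs hFb hi]
    · obtain ⟨hw, hwx⟩ := hwbar i hi
      rw [hAout i hi, dualSubdiff_minTime_eq hFabs hw (mem_singleton_add_iff.1 hwx)]
  simp only [hA, ← Finset.sum_apply _ Finset.univ (fun i => minTime F (Ωi i)), ← isMinOn_iff]
  exact isMinOn_sum_iff_exists_dualSubdiff
    (fun i => convexOn_minTime hFabs hFconv (hΩine i) (hΩiconv i))
    (fun i => continuous_minTime hFnhds hFconv (hΩine i)) hΩconv hxbar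

/-- Necessary and sufficient optimality conditions for the generalized Heron problem
with convex data in a Banach space: `x̄ ∈ Ω` is a global optimal solution if and only
if `0 ∈ Σᵢ Aᵢ(x̄) + N(x̄;Ω)`, where `Aᵢ(x̄) = N(ω̄ᵢ;Ωᵢ) ∩ (−∂ρ_F(ω̄ᵢ − x̄))` for
`x̄ ∉ Ωᵢ` (with `ω̄ᵢ ∈ Π^F_{Ωᵢ}(x̄)` a selected generalized projection) and
`Aᵢ(x̄) = N(x̄;Ωᵢ) ∩ C*` for `x̄ ∈ Ωᵢ`, with `C* = {x* : σ_F(−x*) ≤ 1}`. -/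
theorem heron_convex_optimality_banach
    {X : Type*} [NormedAddCommGroup X] [NormedSpace ℝ X] [CompleteSpace X]
    (F : Set X) (hFc : IsClosed F) (hFb : IsBounded F) (hFconv : Convex ℝ F)
    (hF0 : (0 : X) ∈ interior F)
    (n : ℕ) (hn : 2 ≤ n)
    (Ω : Set X) (hΩne : Ω.Nonempty) (hΩc : IsClosed Ω) (hΩconv : Convex ℝ Ω)
    (Ωi : Fin n → Set X) (hΩine : ∀ i, (Ωi i).Nonempty) (hΩic : ∀ i, IsClosed (Ωi i))
    (hΩiconv : ∀ i, Convex ℝ (Ωi i))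
    (xbar : X) (hxbar : xbar ∈ Ω)
    (wbar : Fin n → X)
    (hwbar : ∀ i, xbar ∉ Ωi i →
      wbar i ∈ Ωi i ∩ ({xbar} + minTime F (Ωi i) xbar • F))
    (A : Fin n → Set (X →L[ℝ] ℝ))
    (hAout : ∀ i, xbar ∉ Ωi i →
      A i = dualNormalCone (Ωi i) (wbar i) ∩ (-(dualSubdiff (gauge F) (wbar i - xbar))))
    (hAin : ∀ i, xbar ∈ Ωi i →
      A i = dualNormalCone (Ωi i) xbar ∩ {f | suppFn F (-f) ≤ 1}) :
    (∀ x ∈ Ω, ∑ i, minTime F (Ωi i) xbar ≤ ∑ i, minTime F (Ωi i) x) ↔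
      ∃ a : Fin n → (X →L[ℝ] ℝ), (∀ i, a i ∈ A i) ∧
        ∃ w ∈ dualNormalCone Ω xbar, ∑ i, a i + w = 0 :=
  heron_convex_optimality_banach_general F hFb hFconv hF0 n Ω hΩconv Ωi hΩine hΩiconv xbar hxbar
    wbar hwbar A hAout hAin
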